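/- Let β | τ² ~ N(0, (σ²/λ₂)·(λ₂τ²/(1+λ₂τ²))) where τ² has density on (0,∞) proportional to (1+λ₂τ²)^{-1/2} exp{−λ₁²τ²/2}. Then the marginal density of β is proportional to exp{−λ₂β²/(2σ²) − λ₁|β|/σ}, the one-dimensional differentially-scaled elastic net prior. -/

import Mathlib

/-!
Writing the variance as `σ² t / (1 + λ₂ t)`, the integrand factors as
`exp (-λ₂ β² / (2σ²))` times `t^{-1/2} exp (-a / t - b t)` with `a = β² / (2σ²)`, `b = λ₁² / 2`.
After `t = u²`, completing the square `a / u² + b u² = (√b u - √a / u)² + 2 √(ab)` and the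
Cauchy–Schlömilch substitution give `∫₀^∞ t^{-1/2} exp (-a / t - b t) dt = √(π / b) exp (-2 √(ab))`,
and `2 √(ab) = λ₁ |β| / σ`.
-/

open MeasureTheory Real Set

/-- The normal density with mean `0` and variance `v`. -/
noncomputable def normalPDF0 (v x : ℝ) : ℝ :=
  (Real.sqrt (2 * Real.pi * v))⁻¹ * Real.exp (-x ^ 2 / (2 * v))

section CauchySchlomilch

variable {E : Type*} [NormedAddCommGroup E] [NormedSpace ℝ E] {c d : ℝ}

lemma hasDerivAt_mul_sub_div (c d : ℝ) {u : ℝ} (hu : u ≠ 0) :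
    HasDerivAt (fun u => d * u - c / u) (d + c / u ^ 2) u := by
  have h := ((hasDerivAt_id u).const_mul d).sub ((hasDerivAt_inv hu).const_mul c)
  simp only [id, mul_one, ← div_eq_mul_inv] at h
  exact h.congr_deriv (by ring)

lemma strictMonoOn_mul_sub_div (hc : 0 ≤ c) (hd : 0 < d) :
    StrictMonoOn (fun u => d * u - c / u) (Ioi 0) := by
  intro x hx y hy hxy
  have : c / y ≤ c / x := div_le_div_of_nonneg_left hc hx hxy.le
  have : d * x < d * y := mul_lt_mul_of_pos_left hxy hd
  simp only
  linarith

lemma image_mul_sub_div_Ioi (hc : 0 < c) (hd : 0 < d) :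
    (fun u => d * u - c / u) '' Ioi 0 = univ := by
  refine eq_univ_of_forall fun y => ?_
  -- the positive root of `d u² - y u - c = 0`
  set s := √(y ^ 2 + 4 * c * d)
  have hs : s ^ 2 = y ^ 2 + 4 * c * d := sq_sqrt (by positivity)
  have hys : 0 < y + s := by
    have : |y| < s := by rw [← sqrt_sq_eq_abs]; exact sqrt_lt_sqrt (sq_nonneg y) (by nlinarith)
    linarith [neg_le_abs y]
  refine ⟨(y + s) / (2 * d), div_pos hys (by positivity), ?_⟩
  field_simp
  nlinarith

theorem integral_Ioi_deriv_smul_comp_mul_sub_div (g : ℝ → E) (hc : 0 < c) (hd : 0 < d) :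
    ∫ u in Ioi 0, (d + c / u ^ 2) • g (d * u - c / u) = ∫ w, g w := by
  have h := integral_image_eq_integral_abs_deriv_smul measurableSet_Ioi
    (fun u hu => (hasDerivAt_mul_sub_div c d (ne_of_gt hu)).hasDerivWithinAt)
    (strictMonoOn_mul_sub_div hc.le hd).injOn g
  rw [image_mul_sub_div_Ioi hc hd, setIntegral_univ] at h
  rw [h]
  refine setIntegral_congr_fun measurableSet_Ioi fun u hu => ?_
  rw [abs_of_pos (by have : 0 < u := hu; positivity)]

theorem integrableOn_Ioi_deriv_smul_comp_mul_sub_div {g : ℝ → E} (hg : Integrable g)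
    (hc : 0 < c) (hd : 0 < d) :
    IntegrableOn (fun u => (d + c / u ^ 2) • g (d * u - c / u)) (Ioi 0) := by
  have h := integrableOn_image_iff_integrableOn_abs_deriv_smul measurableSet_Ioi
    (fun u hu => (hasDerivAt_mul_sub_div c d (ne_of_gt hu)).hasDerivWithinAt)
    (strictMonoOn_mul_sub_div hc.le hd).injOn g
  rw [image_mul_sub_div_Ioi hc hd, integrableOn_univ] at h
  refine (h.mp hg).congr_fun (fun u hu => ?_) measurableSet_Ioi
  dsimp only
  rw [abs_of_pos (by have : 0 < u := hu; positivity)]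

/-- The substitution `u ↦ c / (d u)` maps `d u - c / u` to its negative. -/
theorem integral_Ioi_div_sq_smul_comp_mul_sub_div {g : ℝ → E} (hg : g.Even)
    (hc : 0 < c) (hd : 0 < d) :
    ∫ u in Ioi 0, (c / u ^ 2) • g (d * u - c / u) = d • ∫ u in Ioi 0, g (d * u - c / u) := by
  have hderiv : ∀ u ∈ Ioi (0 : ℝ),
      HasDerivWithinAt (fun u => c / d / u) (-(c / d / u ^ 2)) (Ioi 0) u := by
    intro u hu
    have h := (hasDerivAt_inv (ne_of_gt hu)).const_mul (c / d)
    simp only [← div_eq_mul_inv] at h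
    exact (h.congr_deriv (by ring)).hasDerivWithinAt
  have himg : (fun u => c / d / u) '' Ioi 0 = Ioi 0 := by
    ext y
    refine ⟨fun ⟨u, hu, hy⟩ => hy ▸ div_pos (div_pos hc hd) hu, fun hy => ?_⟩
    refine ⟨c / d / y, div_pos (div_pos hc hd) hy, ?_⟩
    field_simp
  have hinj : InjOn (fun u => c / d / u) (Ioi 0) := fun x hx y hy h => by
    have := (mem_Ioi.mp hx).ne'; have := (mem_Ioi.mp hy).ne'
    field_simp at h
    linarith
  have h := integral_image_eq_integral_abs_deriv_smul measurableSet_Ioi hderiv hinj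
    (fun u => g (d * u - c / u))
  rw [himg] at h
  rw [h, ← integral_smul]
  refine setIntegral_congr_fun measurableSet_Ioi fun u hu => ?_
  have hu : 0 < u := hu
  have hψ : d * (c / d / u) - c / (c / d / u) = -(d * u - c / u) := by
    field_simp; ring
  simp only [hψ, hg _, smul_smul, abs_neg, abs_of_pos (by positivity : 0 < c / d / u ^ 2)]
  congr 1
  field_simp

/-- Cauchy–Schlömilch transformation. -/
theorem integral_Ioi_comp_mul_sub_div {g : ℝ → E} (hg : g.Even) (hgi : Integrable g)
    (hc : 0 < c) (hd : 0 < d) :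
    ∫ u in Ioi 0, g (d * u - c / u) = (2 * d)⁻¹ • ∫ w, g w := by
  have hsum := integrableOn_Ioi_deriv_smul_comp_mul_sub_div hgi hc hd
  have hpart : ∀ r : ℝ → ℝ, Measurable r → (∀ u : ℝ, 0 < u → 0 ≤ r u ∧ r u ≤ d + c / u ^ 2) →
      IntegrableOn (fun u => r u • g (d * u - c / u)) (Ioi 0) := by
    intro r hr hbound
    refine IntegrableOn.congr_fun (hsum.bdd_smul 1 (φ := fun u => r u / (d + c / u ^ 2))
      (hr.div (by fun_prop)).aestronglyMeasurable ?_) (fun u hu => ?_) measurableSet_Ioi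
    · filter_upwards [ae_restrict_mem measurableSet_Ioi] with u hu
      obtain ⟨h0, h1⟩ := hbound u hu
      rw [norm_div, Real.norm_of_nonneg h0, Real.norm_of_nonneg (by positivity)]
      exact div_le_one_of_le₀ h1 (by positivity)
    · have : 0 < d + c / u ^ 2 := by have : 0 < u := hu; positivity
      simp only [Pi.smul_apply', smul_smul, div_mul_cancel₀ _ this.ne']
  have hd' := hpart (fun _ => d) measurable_const fun u hu =>
    ⟨hd.le, le_add_of_nonneg_right (by positivity)⟩
  have hc' := hpart (fun u => c / u ^ 2) (by fun_prop) fun u hu =>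
    ⟨by positivity, le_add_of_nonneg_left hd.le⟩
  have h := integral_Ioi_deriv_smul_comp_mul_sub_div g hc hd
  simp only [add_smul] at h
  rw [integral_add hd' hc', integral_smul, integral_Ioi_div_sq_smul_comp_mul_sub_div hg hc hd,
    ← add_smul] at h
  rw [← h, smul_smul, ← two_mul, inv_mul_cancel₀ (by positivity), one_smul]

end CauchySchlomilch

theorem integral_Ioi_exp_neg_div_sq_sub_mul_sq {a b : ℝ} (ha : 0 ≤ a) (hb : 0 < b) :
    ∫ u in Ioi 0, exp (-(a / u ^ 2) - b * u ^ 2) = √(π / b) / 2 * exp (-(2 * √(a * b))) := by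
  rcases ha.eq_or_lt with rfl | ha
  · simpa using integral_gaussian_Ioi b
  have hsq : ∀ u ∈ Ioi (0 : ℝ), exp (-(a / u ^ 2) - b * u ^ 2)
      = exp (-(2 * √(a * b))) * exp (-(√b * u - √a / u) ^ 2) := by
    intro u hu
    have : (0 : ℝ) < u := hu
    rw [← exp_add, sqrt_mul ha.le]
    congr 1
    field_simp
    linear_combination (u ^ 4) * sq_sqrt hb.le + sq_sqrt ha.le
  have hgauss : ∫ w, exp (-w ^ 2) = √π := by simpa using integral_gaussian 1
  rw [setIntegral_congr_fun measurableSet_Ioi hsq, integral_const_mul,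
    integral_Ioi_comp_mul_sub_div (g := fun w => exp (-w ^ 2)) (fun w => by simp)
      (by simpa using integrable_exp_neg_mul_sq one_pos) (sqrt_pos.2 ha) (sqrt_pos.2 hb),
    hgauss, sqrt_div' _ hb.le, smul_eq_mul]
  field_simp

theorem integral_Ioi_inv_sqrt_mul_exp_neg_div_sub_mul {a b : ℝ} (ha : 0 ≤ a) (hb : 0 < b) :
    ∫ t in Ioi 0, (√t)⁻¹ * exp (-(a / t) - b * t) = √(π / b) * exp (-(2 * √(a * b))) := by
  rw [← integral_comp_rpow_Ioi_of_pos two_pos]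
  have h : ∀ u ∈ Ioi (0 : ℝ), (2 * u ^ ((2 : ℝ) - 1)) • ((√(u ^ (2 : ℝ)))⁻¹ *
      exp (-(a / u ^ (2 : ℝ)) - b * u ^ (2 : ℝ))) = 2 * exp (-(a / u ^ 2) - b * u ^ 2) := by
    intro u hu
    have : (0 : ℝ) < u := hu
    rw [rpow_two, sqrt_sq this.le, show (2 : ℝ) - 1 = 1 by norm_num, rpow_one, smul_eq_mul]
    field_simp
  rw [setIntegral_congr_fun measurableSet_Ioi h, integral_const_mul,
    integral_Ioi_exp_neg_div_sq_sub_mul_sq ha hb]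
  ring

lemma normalPDF0_mul_mixingDensity_eq {lam1 lam2 sig2 t : ℝ} (h2 : 0 < lam2) (hs : 0 < sig2)
    (ht : 0 < t) (β : ℝ) :
    normalPDF0 (sig2 / lam2 * (lam2 * t / (1 + lam2 * t))) β *
        ((1 + lam2 * t) ^ (-(1 : ℝ) / 2) * exp (-lam1 ^ 2 * t / 2))
      = (√(2 * π * sig2))⁻¹ * exp (-(lam2 * β ^ 2) / (2 * sig2)) *
        ((√t)⁻¹ * exp (-(β ^ 2 / (2 * sig2) / t) - lam1 ^ 2 / 2 * t)) := by
  have hst : 0 < 1 + lam2 * t := by positivity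
  have hvar : sig2 / lam2 * (lam2 * t / (1 + lam2 * t)) = sig2 * t / (1 + lam2 * t) := by
    field_simp
  have hsqrt : √(2 * π * (sig2 * t / (1 + lam2 * t)))
      = √(2 * π * sig2) * √t / √(1 + lam2 * t) := by
    rw [← mul_div_assoc, ← mul_assoc, sqrt_div' _ hst.le, sqrt_mul (by positivity)]
  have hrpow : (1 + lam2 * t) ^ (-(1 : ℝ) / 2) = (√(1 + lam2 * t))⁻¹ := by
    rw [neg_div, rpow_neg hst.le, ← sqrt_eq_rpow]
  have hexp : exp (-β ^ 2 / (2 * (sig2 * t / (1 + lam2 * t)))) * exp (-lam1 ^ 2 * t / 2)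
      = exp (-(lam2 * β ^ 2) / (2 * sig2)) *
          exp (-(β ^ 2 / (2 * sig2) / t) - lam1 ^ 2 / 2 * t) := by
    rw [← exp_add, ← exp_add]
    congr 1
    field_simp
    ring
  have : 0 < √(1 + lam2 * t) := sqrt_pos.2 hst
  calc _ = (√(2 * π * sig2))⁻¹ * (√t)⁻¹ *
        (exp (-β ^ 2 / (2 * (sig2 * t / (1 + lam2 * t)))) * exp (-lam1 ^ 2 * t / 2)) := by
        rw [normalPDF0, hvar, hsqrt, hrpow]
        field_simp
    _ = _ := by rw [hexp]; ring

/-- The data-augmentation representation of the differentially-scaled elastic net prior: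
mixing `N(0, (σ²/λ₂)·λ₂t/(1+λ₂t))` over the density on `(0,∞)` proportional to
`(1+λ₂t)^{-1/2} e^{-λ₁²t/2}` yields a marginal density proportional to
`exp{-λ₂β²/(2σ²) - λ₁|β|/σ}`. -/
theorem elastic_net_scale_mixture_differential (lam1 lam2 sig2 : ℝ)
    (h1 : 0 < lam1) (h2 : 0 < lam2) (hs : 0 < sig2) :
    ∃ C : ℝ, 0 < C ∧ ∀ β : ℝ,
      (∫ t in Set.Ioi (0 : ℝ),
          normalPDF0 (sig2 / lam2 * (lam2 * t / (1 + lam2 * t))) β *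
            ((1 + lam2 * t) ^ (-(1 : ℝ) / 2) * Real.exp (-lam1 ^ 2 * t / 2)))
        = C * Real.exp (-(lam2 * β ^ 2) / (2 * sig2) - lam1 * |β| / Real.sqrt sig2) := by
  refine ⟨(lam1 * √sig2)⁻¹, by positivity, fun β => ?_⟩
  have hab : √(β ^ 2 / (2 * sig2) * (lam1 ^ 2 / 2)) = lam1 * |β| / (2 * √sig2) := by
    rw [show β ^ 2 / (2 * sig2) * (lam1 ^ 2 / 2) = (lam1 * |β|) ^ 2 / (2 ^ 2 * sig2) by
      rw [mul_pow, sq_abs]; ring]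
    rw [sqrt_div' _ (by positivity), sqrt_mul (by positivity), sqrt_sq (by positivity),
      sqrt_sq two_pos.le]
  have hpb : √(π / (lam1 ^ 2 / 2)) = √(2 * π) / lam1 := by
    rw [div_div_eq_mul_div, mul_comm, sqrt_div' _ (by positivity), sqrt_sq h1.le]
  rw [setIntegral_congr_fun measurableSet_Ioi fun t ht =>
      normalPDF0_mul_mixingDensity_eq h2 hs ht β,
    integral_const_mul, integral_Ioi_inv_sqrt_mul_exp_neg_div_sub_mul (by positivity)
      (by positivity), hab, hpb, sqrt_mul (by positivity) sig2, sub_eq_add_neg, exp_add]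
  field_simp
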